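/- Let α₁,…,α_r be real numbers with 1, α₁,…,α_r linearly independent over ℚ, with the best-approximation sequence (m_ν) and quantities ζ_ν, M_ν. Suppose that for every ν the r+1 consecutive best approximation vectors m_ν, m_{ν+1}, …, m_{ν+r} ∈ ℤ^{r+1} are linearly independent. Then for every ν one has ζ_ν ≥ 1/((r+1)!·M_{ν+r}^r). -/

import Mathlib

/-!
The integer matrix whose rows are `m_ν, …, m_{ν+r}` is nonsingular, so its determinant is at
least `1` in absolute value. Adding `αⱼ` times column `j` to column `0` for every `j` turns the
first column into `ζ_ν, …, ζ_{ν+r}`, all at most `ζ_ν`, while every other entry is at most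
`M_{ν+r}` in absolute value; expanding the determinant over the `(r+1)!` permutations gives
`1 ≤ (r+1)! · ζ_ν · M_{ν+r}^r`.
-/

open Finset MeasureTheory

/-- The value of the linear form: `ζ(m) = m₀ + Σ mⱼ αⱼ`. -/
def zetaF {r : ℕ} (α : Fin r → ℝ) (m₀ : ℤ) (m : Fin r → ℤ) : ℝ :=
  (m₀ : ℝ) + ∑ j, (m j : ℝ) * α j

/-- `M(m) = max_{1 ≤ j ≤ r} |m_j|` (as a natural number). -/
def Mnorm {r : ℕ} (m : Fin r → ℤ) : ℕ :=
  Finset.univ.sup fun j => (m j).natAbs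

/-- `m = (m₀, m₁, …, m_r)` is a best approximation (in the sense of linear form)
for `α₁, …, α_r`. -/
def IsBestApprox {r : ℕ} (α : Fin r → ℝ) (m₀ : ℤ) (m : Fin r → ℤ) : Prop :=
  m ≠ 0 ∧ 0 < zetaF α m₀ m ∧
    ∀ (n₀ : ℤ) (n : Fin r → ℤ), n ≠ 0 → Mnorm n ≤ Mnorm m →
      zetaF α m₀ m ≤ |zetaF α n₀ n|

/-- `(mz ν, m ν)` is the sequence of all best approximations, ordered by
strictly increasing `M_ν`. -/
def IsBASeq {r : ℕ} (α : Fin r → ℝ) (mz : ℕ → ℤ) (m : ℕ → Fin r → ℤ) : Prop :=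
  (∀ ν, IsBestApprox α (mz ν) (m ν)) ∧
  StrictMono (fun ν => Mnorm (m ν)) ∧
  ∀ (p₀ : ℤ) (p : Fin r → ℤ), IsBestApprox α p₀ p → ∃ ν, p₀ = mz ν ∧ p = m ν

/-- `1, α₁, …, α_r` are linearly independent over `ℚ`. -/
def LinIndepWithOne {r : ℕ} (α : Fin r → ℝ) : Prop :=
  LinearIndependent ℚ (Fin.cons (1 : ℝ) α : Fin (r + 1) → ℝ)

/-- `(α₁, …, α_r)` is a `ψ`-singular tuple (in the sense of linear form). -/
def IsPsiSingular {r : ℕ} (α : Fin r → ℝ) (ψ : ℝ → ℝ) : Prop :=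
  ∀ T : ℝ, 1 < T → ∃ n : Fin r → ℤ, n ≠ 0 ∧ (∀ j, (|n j| : ℝ) ≤ T) ∧
    ∃ n₀ : ℤ, |zetaF α n₀ n| < ψ T

namespace Matrix

variable {n : Type*} [Fintype n] [DecidableEq n]

theorem det_ne_zero_of_linearIndependent_map {R K : Type*} [CommRing R] [Field K] (f : R →+* K)
    {A : Matrix n n R} (h : LinearIndependent K (A.map f).row) : A.det ≠ 0 := by
  intro hA
  have hunit := (isUnit_iff_isUnit_det _).mp (linearIndependent_rows_iff_isUnit.mp h)
  rw [← RingHom.mapMatrix_apply, ← RingHom.map_det, hA, map_zero] at hunit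
  exact not_isUnit_zero hunit

theorem det_le_of_le_col {R S : Type*} [CommRing R] [Nontrivial R] [CommRing S] [LinearOrder S]
    [IsStrictOrderedRing S] {A : Matrix n n R} {abv : AbsoluteValue R S} {c : n → S}
    (hc : ∀ i j, abv (A i j) ≤ c j) :
    abv A.det ≤ (Fintype.card n).factorial • ∏ j, c j :=
  calc
    abv A.det = abv (∑ σ : Equiv.Perm n, Equiv.Perm.sign σ • ∏ j, A (σ j) j) :=
      congr_arg abv (det_apply _)
    _ ≤ ∑ σ : Equiv.Perm n, abv (Equiv.Perm.sign σ • ∏ j, A (σ j) j) := abv.sum_le _ _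
    _ = ∑ σ : Equiv.Perm n, ∏ j, abv (A (σ j) j) :=
      sum_congr rfl fun σ _ => by rw [abv.map_units_int_smul, abv.map_prod]
    _ ≤ ∑ _σ : Equiv.Perm n, ∏ j, c j := by gcongr with σ _ j; exact hc _ _
    _ = (Fintype.card n).factorial • ∏ j, c j := by simp [Fintype.card_perm]

end Matrix

section Mnorm

variable {r : ℕ}

theorem natAbs_le_Mnorm (m : Fin r → ℤ) (j : Fin r) : (m j).natAbs ≤ Mnorm m :=
  Finset.le_sup (f := fun j => (m j).natAbs) (mem_univ j)

theorem abs_le_Mnorm (m : Fin r → ℤ) (j : Fin r) : |(m j : ℝ)| ≤ Mnorm m := by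
  rw [← Int.cast_abs, Int.abs_eq_natAbs]
  exact_mod_cast natAbs_le_Mnorm m j

end Mnorm

theorem zetaF_eq_sum_cons {r : ℕ} (α : Fin r → ℝ) (m₀ : ℤ) (m : Fin r → ℤ) :
    zetaF α m₀ m = ∑ k, (Fin.cons (1 : ℝ) α : Fin (r + 1) → ℝ) k •
      ((Fin.cons m₀ m : Fin (r + 1) → ℤ) k : ℝ) := by
  simp [zetaF, Fin.sum_univ_succ, mul_comm]

namespace IsBASeq

variable {r : ℕ} {α : Fin r → ℝ} {mz : ℕ → ℤ} {m : ℕ → Fin r → ℤ}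

theorem zetaF_pos (hBA : IsBASeq α mz m) (ν : ℕ) : 0 < zetaF α (mz ν) (m ν) :=
  (hBA.1 ν).2.1

theorem zetaF_antitone (hBA : IsBASeq α mz m) : Antitone fun ν => zetaF α (mz ν) (m ν) := by
  intro k l hkl
  have h := (hBA.1 l).2.2 (mz k) (m k) (hBA.1 k).1 (hBA.2.1.monotone hkl)
  rwa [abs_of_pos (hBA.zetaF_pos k)] at h

end IsBASeq

def consecutiveMatrix {r : ℕ} (mz : ℕ → ℤ) (m : ℕ → Fin r → ℤ) (ν : ℕ) :
    Matrix (Fin (r + 1)) (Fin (r + 1)) ℤ :=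
  Matrix.of fun i => Fin.cons (mz (ν + i)) (m (ν + i))

/-- The coefficient of `m₀` in `ζ` is `1`, so this is an elementary column operation. -/
theorem det_updateCol_zero_zetaF {r : ℕ} (α : Fin r → ℝ) (mz : ℕ → ℤ) (m : ℕ → Fin r → ℤ)
    (ν : ℕ) :
    (((consecutiveMatrix mz m ν).map (Int.cast : ℤ → ℝ)).updateCol 0
        fun i => zetaF α (mz (ν + i)) (m (ν + i))).det = (consecutiveMatrix mz m ν).det := by
  simp_rw [zetaF_eq_sum_cons]
  rw [show ((consecutiveMatrix mz m ν).det : ℝ) = _ from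
    RingHom.map_det (Int.castRingHom ℝ) (consecutiveMatrix mz m ν)]
  convert Matrix.det_updateCol_sum ((consecutiveMatrix mz m ν).map (Int.cast : ℤ → ℝ)) 0
    (Fin.cons (1 : ℝ) α) using 1
  · rfl
  · rw [Fin.cons_zero, one_smul]
    rfl

theorem one_le_factorial_mul_zetaF_mul_Mnorm_pow {r : ℕ} {α : Fin r → ℝ} {mz : ℕ → ℤ}
    {m : ℕ → Fin r → ℤ} (hBA : IsBASeq α mz m) (ν : ℕ)
    (hindep : LinearIndependent ℚ ((consecutiveMatrix mz m ν).map (Int.cast : ℤ → ℚ)).row) :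
    1 ≤ ((r + 1).factorial : ℝ) * (zetaF α (mz ν) (m ν) * Mnorm (m (ν + r)) ^ r) := by
  set A := consecutiveMatrix mz m ν
  set B := (A.map (Int.cast : ℤ → ℝ)).updateCol 0 fun i => zetaF α (mz (ν + i)) (m (ν + i))
  have hA : (1 : ℝ) ≤ |(A.det : ℝ)| := by
    exact_mod_cast Int.one_le_abs
      (Matrix.det_ne_zero_of_linearIndependent_map (Int.castRingHom ℚ) hindep)
  have hB : ∀ i j, |B i j| ≤
      (Fin.cons (zetaF α (mz ν) (m ν)) fun _ => (Mnorm (m (ν + r)) : ℝ) : Fin (r + 1) → ℝ) j := by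
    intro i j
    cases j using Fin.cases with
    | zero =>
      simpa [B, abs_of_pos (hBA.zetaF_pos _)] using hBA.zetaF_antitone (Nat.le_add_right ν i)
    | succ j =>
      have hle : ν + (i : ℕ) ≤ ν + r := by omega
      simpa [B, A, consecutiveMatrix, Fin.succ_ne_zero] using
        (abs_le_Mnorm (m (ν + i)) j).trans (by exact_mod_cast hBA.2.1.monotone hle)
  calc (1 : ℝ) ≤ |(A.det : ℝ)| := hA
    _ = |B.det| := by rw [det_updateCol_zero_zetaF]
    _ ≤ _ := by
      simpa [Fin.prod_univ_succ] using Matrix.det_le_of_le_col (abv := AbsoluteValue.abs) hB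

theorem stmt4_general (r : ℕ) (α : Fin r → ℝ)
    (mz : ℕ → ℤ) (m : ℕ → Fin r → ℤ) (hBA : IsBASeq α mz m)
    (hindep : ∀ ν, LinearIndependent ℚ
      fun i : Fin (r + 1) => (fun j => ((Fin.cons (mz (ν + i)) (m (ν + i)) : Fin (r+1) → ℤ) j : ℚ)))
    (ν : ℕ) :
    1 / ((r + 1).factorial * (Mnorm (m (ν + r)) : ℝ) ^ r) ≤ zetaF α (mz ν) (m ν) := by
  have hkey := one_le_factorial_mul_zetaF_mul_Mnorm_pow hBA ν (hindep ν)
  have hD : 0 < ((r + 1).factorial : ℝ) * (Mnorm (m (ν + r)) : ℝ) ^ r := by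
    refine lt_of_le_of_ne (by positivity) fun h => ?_
    rw [mul_left_comm, ← h, mul_zero] at hkey
    exact one_pos.not_ge hkey
  rw [div_le_iff₀ hD]
  linarith

/-- if every `r+1` consecutive best approximations are linearly independent, then
`ζ_ν ≥ 1 / ((r+1)! · M_{ν+r}^r)`. -/
theorem stmt4 (r : ℕ) (hr : 1 ≤ r) (α : Fin r → ℝ) (hα : LinIndepWithOne α)
    (mz : ℕ → ℤ) (m : ℕ → Fin r → ℤ) (hBA : IsBASeq α mz m)
    (hindep : ∀ ν, LinearIndependent ℚ
      fun i : Fin (r + 1) => (fun j => ((Fin.cons (mz (ν + i)) (m (ν + i)) : Fin (r+1) → ℤ) j : ℚ)))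
    (ν : ℕ) :
    1 / ((r + 1).factorial * (Mnorm (m (ν + r)) : ℝ) ^ r) ≤ zetaF α (mz ν) (m ν) :=
  stmt4_general r α mz m hBA hindep ν
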